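/- For every β ∈ L, the evaluation map e_β : H_ℂ → L_ℂ defined by e_β(h) := h(β) satisfies e_β(W) ⊆ L^{1,0} and e_β(σ_H(W)) ⊆ L^{0,1}, where σ_H denotes the conjugation f ↦ σ∘f∘σ of End_ℂ(L_ℂ) restricted to H_ℂ; moreover e_β(id) = β, so e_β is nonzero whenever β ≠ 0. In particular, if H_ℂ = W ⊕ σ_H(W), then for β ≠ 0 the map e_β is a nonzero morphism of weight 1 Hodge structures from (H, W) to (L, L^{1,0}). -/

import Mathlib

set_option linter.unusedSectionVars false
open scoped TensorProduct

noncomputable section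

variable (L : Type) [AddCommGroup L] [Module ℚ L] [FiniteDimensional ℚ L]

/-- The conjugate-linear involution of `L_ℂ = ℂ ⊗[ℚ] L` fixing `L`. -/
def sigmaL : ℂ ⊗[ℚ] L →ₗ[ℚ] ℂ ⊗[ℚ] L :=
  LinearMap.rTensor L (Complex.conjAe.toLinearMap.restrictScalars ℚ)

/-- The inclusion of `L` into `L_ℂ = ℂ ⊗[ℚ] L`. -/
def inclL : L →ₗ[ℚ] ℂ ⊗[ℚ] L := TensorProduct.mk ℚ ℂ L 1

lemma sigmaL_smul (c : ℂ) (x : ℂ ⊗[ℚ] L) :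
    sigmaL L (c • x) = (starRingEnd ℂ c) • sigmaL L x := by
  induction x using TensorProduct.induction_on with
  | zero => simp
  | tmul a b =>
      simp [sigmaL, TensorProduct.smul_tmul', smul_eq_mul, map_mul]
  | add x y hx hy => simp only [smul_add, map_add, hx, hy]

lemma sigmaL_sigmaL (x : ℂ ⊗[ℚ] L) : sigmaL L (sigmaL L x) = x := by
  induction x using TensorProduct.induction_on with
  | zero => simp
  | tmul a b => simp [sigmaL]
  | add x y hx hy => simp only [map_add, hx, hy]

/-- The image `σ(S)` of a `ℂ`-subspace `S ⊆ L_ℂ` under the conjugation `σ`, again a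
`ℂ`-subspace. -/
def conjSub (S : Submodule ℂ (ℂ ⊗[ℚ] L)) : Submodule ℂ (ℂ ⊗[ℚ] L) where
  carrier := sigmaL L '' S
  add_mem' := by
    rintro x y ⟨w, hw, rfl⟩ ⟨v, hv, rfl⟩
    exact ⟨w + v, S.add_mem hw hv, map_add _ _ _⟩
  zero_mem' := ⟨0, S.zero_mem, map_zero _⟩
  smul_mem' := by
    rintro c x ⟨w, hw, rfl⟩
    refine ⟨(starRingEnd ℂ c) • w, S.smul_mem _ hw, ?_⟩
    rw [sigmaL_smul]
    simp

/-- The conjugation `f ↦ σ ∘ f ∘ σ` on `End_ℂ(L_ℂ)`. -/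
def conjEnd (f : Module.End ℂ (ℂ ⊗[ℚ] L)) : Module.End ℂ (ℂ ⊗[ℚ] L) where
  toFun x := sigmaL L (f (sigmaL L x))
  map_add' x y := by simp only [map_add]
  map_smul' c x := by
    show sigmaL L (f (sigmaL L (c • x))) = c • sigmaL L (f (sigmaL L x))
    rw [sigmaL_smul, f.map_smul, sigmaL_smul]
    simp

/-- `End^{2,0} ⊆ End_ℂ(L_ℂ)`: the endomorphisms killing `L^{1,0}` and mapping `L^{0,1}`
into `L^{1,0}`. -/
def End20 (L10 : Submodule ℂ (ℂ ⊗[ℚ] L)) : Submodule ℂ (Module.End ℂ (ℂ ⊗[ℚ] L)) where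
  carrier := {f | (∀ x ∈ L10, f x = 0) ∧ ∀ x ∈ conjSub L L10, f x ∈ L10}
  add_mem' := fun hf hg =>
    ⟨fun x hx => by simp [LinearMap.add_apply, hf.1 x hx, hg.1 x hx],
     fun x hx => by simpa [LinearMap.add_apply] using L10.add_mem (hf.2 x hx) (hg.2 x hx)⟩
  zero_mem' := ⟨fun x _ => rfl, fun x _ => L10.zero_mem⟩
  smul_mem' := fun c f hf =>
    ⟨fun x hx => by simp [LinearMap.smul_apply, hf.1 x hx],
     fun x hx => by simpa [LinearMap.smul_apply] using L10.smul_mem c (hf.2 x hx)⟩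

/-- `End^{1,1} ⊆ End_ℂ(L_ℂ)`: the endomorphisms preserving `L^{1,0}` and `L^{0,1}`. -/
def End11 (L10 : Submodule ℂ (ℂ ⊗[ℚ] L)) : Submodule ℂ (Module.End ℂ (ℂ ⊗[ℚ] L)) where
  carrier := {f | (∀ x ∈ L10, f x ∈ L10) ∧ ∀ x ∈ conjSub L L10, f x ∈ conjSub L L10}
  add_mem' := fun hf hg =>
    ⟨fun x hx => by simpa [LinearMap.add_apply] using L10.add_mem (hf.1 x hx) (hg.1 x hx),
     fun x hx => by
      simpa [LinearMap.add_apply] using (conjSub L L10).add_mem (hf.2 x hx) (hg.2 x hx)⟩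
  zero_mem' := ⟨fun x _ => L10.zero_mem, fun x _ => (conjSub L L10).zero_mem⟩
  smul_mem' := fun c f hf =>
    ⟨fun x hx => by simpa [LinearMap.smul_apply] using L10.smul_mem c (hf.1 x hx),
     fun x hx => by
      simpa [LinearMap.smul_apply] using (conjSub L L10).smul_mem c (hf.2 x hx)⟩

/-- `End^{0,2} ⊆ End_ℂ(L_ℂ)`: the endomorphisms killing `L^{0,1}` and mapping `L^{1,0}`
into `L^{0,1}`. -/
def End02 (L10 : Submodule ℂ (ℂ ⊗[ℚ] L)) : Submodule ℂ (Module.End ℂ (ℂ ⊗[ℚ] L)) where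
  carrier := {f | (∀ x ∈ conjSub L L10, f x = 0) ∧ ∀ x ∈ L10, f x ∈ conjSub L L10}
  add_mem' := fun hf hg =>
    ⟨fun x hx => by simp [LinearMap.add_apply, hf.1 x hx, hg.1 x hx],
     fun x hx => by
      simpa [LinearMap.add_apply] using (conjSub L L10).add_mem (hf.2 x hx) (hg.2 x hx)⟩
  zero_mem' := ⟨fun x _ => rfl, fun x _ => (conjSub L L10).zero_mem⟩
  smul_mem' := fun c f hf =>
    ⟨fun x hx => by simp [LinearMap.smul_apply, hf.1 x hx],
     fun x hx => by
      simpa [LinearMap.smul_apply] using (conjSub L L10).smul_mem c (hf.2 x hx)⟩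

/-- The complexification `H_ℂ ⊆ End_ℂ(L_ℂ)` of a subalgebra `H ⊆ End_ℚ(L)`: the `ℂ`-linear
span of the base-changed endomorphisms `f ⊗ 1` for `f ∈ H`. -/
def complexSpan (HQ : Subalgebra ℚ (Module.End ℚ L)) :
    Submodule ℂ (Module.End ℂ (ℂ ⊗[ℚ] L)) :=
  Submodule.span ℂ ((fun f : Module.End ℚ L => LinearMap.baseChange ℂ f) ''
    (HQ : Set (Module.End ℚ L)))

/-! Every element of `End^{2,0}` kills `L^{1,0}` and maps `L^{0,1}` into `L^{1,0}`; since
`L_ℂ = L^{1,0} + L^{0,1}`, its whole image lies in `L^{1,0}`, hence so does the image of every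
element of `W = H^{2,0}·H_ℂ`, and conjugating by `σ` moves this to `L^{0,1}`. Nonvanishing of
`e_β` comes from evaluating `id ∈ H_ℂ`: `β ↦ 1 ⊗ β` is injective because `ℂ` is faithfully flat
over `ℚ`. -/

section

variable {R V : Type*} [CommSemiring R] [AddCommMonoid V] [Module R V]

lemma Submodule.apply_mem_of_mem_mul {M N : Submodule R (Module.End R V)} {P : Submodule R V}
    (hM : ∀ g ∈ M, ∀ x, g x ∈ P) {f : Module.End R V} (hf : f ∈ M * N) : ∀ x, f x ∈ P :=
  Submodule.mul_induction_on hf (fun g hg h _ x => hM g hg (h x))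
    fun _ _ ha hb x => P.add_mem (ha x) (hb x)

end

lemma End20_apply_mem {L10 : Submodule ℂ (ℂ ⊗[ℚ] L)} (hsup : L10 ⊔ conjSub L L10 = ⊤)
    {f : Module.End ℂ (ℂ ⊗[ℚ] L)} (hf : f ∈ End20 L L10) (x : ℂ ⊗[ℚ] L) : f x ∈ L10 := by
  obtain ⟨a, ha, b, hb, rfl⟩ := Submodule.mem_sup.mp (hsup ▸ Submodule.mem_top : x ∈ _)
  rw [map_add, hf.1 a ha, zero_add]
  exact hf.2 b hb

lemma conjEnd_apply_mem_conjSub {S : Submodule ℂ (ℂ ⊗[ℚ] L)} {f : Module.End ℂ (ℂ ⊗[ℚ] L)}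
    (hf : ∀ x, f x ∈ S) (x : ℂ ⊗[ℚ] L) : conjEnd L f x ∈ conjSub L S :=
  ⟨f (sigmaL L x), hf _, rfl⟩

lemma one_mem_complexSpan (HQ : Subalgebra ℚ (Module.End ℚ L)) : 1 ∈ complexSpan L HQ :=
  Submodule.subset_span ⟨1, HQ.one_mem, LinearMap.baseChange_one ℚ L⟩

lemma inclL_eq_zero_iff (β : L) : inclL L β = 0 ↔ β = 0 :=
  Module.FaithfullyFlat.one_tmul_eq_zero_iff (R := ℚ) (M := L) (A := ℂ) β

theorem evaluation_morphism_of_hodge_structures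
    (L10 : Submodule ℂ (ℂ ⊗[ℚ] L))
    (hsup : L10 ⊔ conjSub L L10 = ⊤)
    (HQ : Subalgebra ℚ (Module.End ℚ L)) :
    ∀ β : L,
      (∀ f ∈ (complexSpan L HQ ⊓ End20 L L10) * complexSpan L HQ,
        f (inclL L β) ∈ L10) ∧
      (∀ f ∈ (complexSpan L HQ ⊓ End20 L L10) * complexSpan L HQ,
        conjEnd L f (inclL L β) ∈ conjSub L L10) ∧
      (1 : Module.End ℂ (ℂ ⊗[ℚ] L)) (inclL L β) = inclL L β ∧
      (β ≠ 0 → ∃ f ∈ complexSpan L HQ, f (inclL L β) ≠ 0) := by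
  intro β
  have hW : ∀ f ∈ (complexSpan L HQ ⊓ End20 L L10) * complexSpan L HQ, ∀ x, f x ∈ L10 :=
    fun f hf => Submodule.apply_mem_of_mem_mul
      (fun g hg => End20_apply_mem L hsup (Submodule.mem_inf.mp hg).2) hf
  refine ⟨fun f hf => hW f hf _, fun f hf => conjEnd_apply_mem_conjSub L (hW f hf) _, rfl,
    fun hβ => ⟨1, one_mem_complexSpan L HQ, ?_⟩⟩
  rwa [Module.End.one_apply, Ne, inclL_eq_zero_iff]
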